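/- Let the target welfare set W(I) contain all balanced allocations of instance I. Then the W-Constrained Round Robin algorithm coincides with a round-robin sequential allocation rule on I; in particular, if additionally all utilities are strictly positive, the output allocation is NEF1. -/

import Mathlib

open Finset

/-- A complete allocation `q : O → Fin n` is balanced if any two bundle sizes differ by at
most one. -/
def Balanced10 {n : ℕ} {O : Type*} [Fintype O] [DecidableEq O] (q : O → Fin n) : Prop :=
  ∀ i j : Fin n,
    (Finset.univ.filter fun o => q o = i).card ≤ (Finset.univ.filter fun o => q o = j).card + 1

/-- A partial assignment `done` (a list of agent–item pairs) can be completed to an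
allocation in `W`. -/
def Completable10 {n : ℕ} {O : Type*} (W : (O → Fin n) → Prop)
    (done : List (Fin n × O)) : Prop :=
  ∃ q : O → Fin n, W q ∧ ∀ pr ∈ done, q pr.2 = pr.1

/-- Number of items agent `i` has received so far. -/
def cnt10 {n : ℕ} {O : Type*} (done : List (Fin n × O)) (i : Fin n) : ℕ :=
  (done.map Prod.fst).count i

/-- A run of the W-Constrained Round Robin algorithm: at each step, among the agents
having the fewest items so far, the agent `a` of lowest index for whom some most-preferred
remaining item can be assigned while keeping the partial allocation completable to an
allocation in `W` receives such an item. -/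
def crrValid {n : ℕ} {O : Type*} [DecidableEq O] (W : (O → Fin n) → Prop)
    (u : Fin n → O → ℝ) :
    List (Fin n) → List O → List (Fin n × O) → Finset O → Prop
  | [], [], _, _ => True
  | a :: s, o :: ps, done, rem =>
      o ∈ rem ∧ (∀ o' ∈ rem, u a o' ≤ u a o) ∧ Completable10 W ((a, o) :: done) ∧
      (∀ b : Fin n, cnt10 done a ≤ cnt10 done b) ∧
      (∀ b : Fin n, (∀ b' : Fin n, cnt10 done b ≤ cnt10 done b') →
        (∃ o' ∈ rem, (∀ o'' ∈ rem, u b o'' ≤ u b o') ∧ Completable10 W ((b, o') :: done)) →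
        a ≤ b) ∧
      crrValid W u s ps ((a, o) :: done) (rem.erase o)
  | _, _, _, _ => False

/-- Ordinary sequential allocation: each agent on their turn picks a remaining item of
maximal utility. -/
def seqValid10 {A O : Type*} [DecidableEq O] (u : A → O → ℝ) :
    List A → List O → Finset O → Prop
  | [], [], _ => True
  | a :: s, o :: ps, rem =>
      o ∈ rem ∧ (∀ o' ∈ rem, u a o' ≤ u a o) ∧ seqValid10 u s ps (rem.erase o)
  | _, _, _ => False

/-- The bundle of items picked by agent `i` in the run `(seq, picks)`. -/
def bundle10 {n : ℕ} {O : Type*} [DecidableEq O] (seq : List (Fin n)) (picks : List O)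
    (i : Fin n) : Finset O :=
  ((seq.zip picks).filterMap (fun x => if x.1 = i then some x.2 else none)).toFinset

/-!
By induction along the run, after `L` picks agent `i` holds `roundRobinCount n L i =
L / n + [i < L % n]` items. The agents with fewest items are then those with index at least
`L % n`, and agent `L % n` is never blocked by the completability constraint: continuing in
round-robin order from any such partial allocation produces a balanced, hence admissible,
allocation. So W-CRR always serves agent `L % n`, i.e. it is round robin.

For NEF1, move each pick of `j` back by `d = (j - i) mod n` turns: this lands on a pick of `i`
made no later, hence weakly preferred by `i`. Only a pick of `j` made in the first `d` turns
has no such partner, and there is at most one (its index is `j`).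
-/

def roundRobinCount (n L i : ℕ) : ℕ := L / n + if i < L % n then 1 else 0

theorem roundRobinCount_succ {n : ℕ} (hn : 0 < n) (L : ℕ) {i : ℕ} (hi : i < n) :
    roundRobinCount n (L + 1) i = roundRobinCount n L i + if i = L % n then 1 else 0 := by
  obtain ⟨q, r, hr, rfl⟩ : ∃ q r, r < n ∧ L = n * q + r :=
    ⟨L / n, L % n, Nat.mod_lt _ hn, (Nat.div_add_mod L n).symm⟩
  have hL : (n * q + r) / n = q ∧ (n * q + r) % n = r := by
    simp [Nat.mul_add_div hn, Nat.div_eq_of_lt hr, Nat.mod_eq_of_lt hr]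
  rcases Nat.lt_or_ge (r + 1) n with hr1 | hr1
  · have hL1 : (n * q + r + 1) / n = q ∧ (n * q + r + 1) % n = r + 1 := by
      simp [add_assoc, Nat.mul_add_div hn, Nat.div_eq_of_lt hr1, Nat.mod_eq_of_lt hr1]
    simp only [roundRobinCount, hL, hL1]
    split_ifs <;> omega
  · have hL1 : (n * q + r + 1) / n = q + 1 ∧ (n * q + r + 1) % n = 0 := by
      rw [show n * q + r + 1 = n * (q + 1) by rw [Nat.mul_succ]; omega]
      simp [hn.ne']
    simp only [roundRobinCount, hL, hL1]
    split_ifs <;> omega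

theorem roundRobinCount_le_add_one (n L i j : ℕ) :
    roundRobinCount n L i ≤ roundRobinCount n L j + 1 := by
  unfold roundRobinCount
  split_ifs <;> omega

theorem roundRobinCount_mod_le (n L i : ℕ) :
    roundRobinCount n L (L % n) ≤ roundRobinCount n L i := by
  simp [roundRobinCount]

theorem roundRobinCount_le_mod_iff (n L i : ℕ) :
    roundRobinCount n L i ≤ roundRobinCount n L (L % n) ↔ L % n ≤ i := by
  simp [roundRobinCount]

theorem sub_shift_mod_eq {n i j k : ℕ} (hi : i < n) (hk : k % n = j)
    (hd : (j + n - i) % n ≤ k) : (k - (j + n - i) % n) % n = i := by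
  have hmod : k - (j + n - i) % n + (j + n - i) % n ≡ i + (j + n - i) % n [MOD n] := by
    rw [Nat.sub_add_cancel hd, Nat.ModEq, Nat.add_mod_mod, Nat.add_sub_cancel' (by omega),
      Nat.add_mod_right, ← hk, Nat.mod_mod]
  rw [Nat.ModEq.add_right_cancel' _ hmod, Nat.mod_eq_of_lt hi]

theorem cnt10_cons {n : ℕ} {O : Type*} (a : Fin n) (o : O) (done : List (Fin n × O))
    (i : Fin n) : cnt10 ((a, o) :: done) i = cnt10 done i + if i = a then 1 else 0 := by
  by_cases h : i = a <;> simp [cnt10, h, Ne.symm]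

theorem cnt10_eq_length_filter {n : ℕ} {O : Type*} (done : List (Fin n × O)) (i : Fin n) :
    cnt10 done i = (done.filter (·.1 = i)).length := by
  rw [cnt10, List.count_eq_countP, List.countP_map, List.countP_eq_length_filter]
  rfl

theorem exists_card_fiber_eq_cnt10 {n : ℕ} {O : Type*} [Fintype O] [DecidableEq O]
    (full : List (Fin n × O)) (hnd : (full.map Prod.snd).Nodup)
    (hcover : ∀ o, o ∈ full.map Prod.snd) :
    ∃ q : O → Fin n, (∀ pr ∈ full, q pr.2 = pr.1) ∧
      ∀ i, (univ.filter fun o => q o = i).card = cnt10 full i := by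
  choose g hg hgo using fun o => List.mem_map.1 (hcover o)
  have hq : ∀ pr ∈ full, (g pr.2).1 = pr.1 := fun pr hpr =>
    congrArg Prod.fst (List.inj_on_of_nodup_map hnd (hg _) hpr (hgo _))
  refine ⟨fun o => (g o).1, hq, fun i => ?_⟩
  have hfiber : (univ.filter fun o => (g o).1 = i) =
      ((full.filter (·.1 = i)).map Prod.snd).toFinset := by
    ext o
    simp only [mem_filter, mem_univ, true_and, List.mem_toFinset, List.mem_map,
      List.mem_filter, decide_eq_true_eq]
    constructor
    · rintro rfl
      exact ⟨g o, ⟨hg o, rfl⟩, hgo o⟩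
    · rintro ⟨pr, ⟨hpr, rfl⟩, rfl⟩
      exact hq pr hpr
  rw [hfiber, List.toFinset_card_of_nodup ((List.filter_sublist.map _).nodup hnd),
    List.length_map, cnt10_eq_length_filter]

def RoundRobinCounts {n : ℕ} {O : Type*} (done : List (Fin n × O)) : Prop :=
  ∀ i : Fin n, cnt10 done i = roundRobinCount n done.length i

theorem RoundRobinCounts.cons {n : ℕ} (hn : 0 < n) {O : Type*} {done : List (Fin n × O)}
    (hcnt : RoundRobinCounts done) {a : Fin n} (ha : a.val = done.length % n) (o : O) :
    RoundRobinCounts ((a, o) :: done) := by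
  intro i
  rw [cnt10_cons, hcnt i, List.length_cons, roundRobinCount_succ hn _ i.isLt]
  simp only [← ha, Fin.val_inj]

theorem exists_balanced_extension {n : ℕ} (hn : 0 < n) {O : Type*} [Fintype O] [DecidableEq O]
    (done : List (Fin n × O)) (hnd : (done.map Prod.snd).Nodup) (hcnt : RoundRobinCounts done) :
    ∃ q : O → Fin n, Balanced10 q ∧ ∀ pr ∈ done, q pr.2 = pr.1 := by
  by_cases hcover : ∀ o, o ∈ done.map Prod.snd
  · obtain ⟨q, hq, hfiber⟩ := exists_card_fiber_eq_cnt10 done hnd hcover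
    refine ⟨q, fun i j => ?_, hq⟩
    rw [hfiber, hfiber, hcnt, hcnt]
    exact roundRobinCount_le_add_one ..
  · push Not at hcover
    obtain ⟨o, ho⟩ := hcover
    have hnd' : (((⟨done.length % n, Nat.mod_lt _ hn⟩, o) :: done).map Prod.snd).Nodup :=
      List.nodup_cons.2 ⟨ho, hnd⟩
    obtain ⟨q, hbal, hq⟩ := exists_balanced_extension hn _ hnd' (hcnt.cons hn rfl o)
    exact ⟨q, hbal, fun pr hpr => hq pr (List.mem_cons_of_mem _ hpr)⟩
termination_by Fintype.card O - done.length
decreasing_by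
  have := hnd'.length_le_card
  simp only [List.length_map, List.length_cons] at this ⊢
  omega

namespace seqValid10

variable {A O : Type*} [DecidableEq O] {u : A → O → ℝ}

theorem length_eq : ∀ {s : List A} {ps : List O} {rem : Finset O},
    seqValid10 u s ps rem → s.length = ps.length
  | [], [], _, _ => rfl
  | _ :: _, _ :: _, _, h => congrArg (· + 1) (length_eq h.2.2)

theorem subset : ∀ {s : List A} {ps : List O} {rem : Finset O},
    seqValid10 u s ps rem → ∀ o ∈ ps, o ∈ rem
  | [], [], _, _ => by simp
  | _ :: _, _ :: _, _, h => by
    simp only [List.mem_cons, forall_eq_or_imp]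
    exact ⟨h.1, fun o ho => mem_of_mem_erase (subset h.2.2 o ho)⟩

theorem nodup : ∀ {s : List A} {ps : List O} {rem : Finset O},
    seqValid10 u s ps rem → ps.Nodup
  | [], [], _, _ => List.nodup_nil
  | _ :: _, _ :: _, _, h =>
    List.nodup_cons.2 ⟨fun ho => (ne_of_mem_erase (subset h.2.2 _ ho)) rfl, nodup h.2.2⟩

theorem utility_le : ∀ {s : List A} {ps : List O} {rem : Finset O},
    seqValid10 u s ps rem → ∀ {t l : ℕ} (ht : t < s.length) (hl : l < ps.length) (htl : t ≤ l),
      u s[t] ps[l] ≤ u s[t] (ps[t]'(htl.trans_lt hl))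
  | _ :: _, _ :: _, _, h, 0, _, _, _, _ => h.2.1 _ (subset h _ (List.getElem_mem _))
  | _ :: _, _ :: _, _, h, _ + 1, _ + 1, ht, hl, htl =>
    utility_le h.2.2 (Nat.lt_of_succ_lt_succ ht) (Nat.lt_of_succ_lt_succ hl)
      (Nat.le_of_succ_le_succ htl)

end seqValid10

section CRR

variable {n : ℕ} {O : Type*} [Fintype O] [DecidableEq O] {u : Fin n → O → ℝ}
  {W : (O → Fin n) → Prop}

theorem crr_turn_eq_mod (hn : 0 < n) (hW : ∀ q : O → Fin n, Balanced10 q → W q)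
    {done : List (Fin n × O)} {rem : Finset O} (hnd : (done.map Prod.snd).Nodup)
    (hrem : rem = univ \ (done.map Prod.snd).toFinset) (hcnt : RoundRobinCounts done)
    (hne : rem.Nonempty) {a : Fin n} (hmin : ∀ b : Fin n, cnt10 done a ≤ cnt10 done b)
    (hfirst : ∀ b : Fin n, (∀ b' : Fin n, cnt10 done b ≤ cnt10 done b') →
      (∃ o' ∈ rem, (∀ o'' ∈ rem, u b o'' ≤ u b o') ∧ Completable10 W ((b, o') :: done)) →
      a ≤ b) :
    a.val = done.length % n := by
  set b : Fin n := ⟨done.length % n, Nat.mod_lt _ hn⟩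
  have hb : ∀ b' : Fin n, cnt10 done b ≤ cnt10 done b' := fun b' => by
    rw [hcnt, hcnt]
    exact roundRobinCount_mod_le ..
  have hba : b.val ≤ a.val := by
    have := hmin b
    rwa [hcnt, hcnt, roundRobinCount_le_mod_iff] at this
  obtain ⟨o, ho, hbest⟩ := exists_max_image rem (u b) hne
  have hfresh : o ∉ done.map Prod.snd := by
    simpa [hrem] using ho
  obtain ⟨q, hbal, hq⟩ := exists_balanced_extension hn ((b, o) :: done)
    (List.nodup_cons.2 ⟨hfresh, hnd⟩) (hcnt.cons hn rfl o)
  have hab : a ≤ b := hfirst b hb ⟨o, ho, hbest, q, hW q hbal, hq⟩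
  exact le_antisymm hab hba

theorem crrValid_roundRobin (hn : 0 < n) (hW : ∀ q : O → Fin n, Balanced10 q → W q) :
    ∀ {seq : List (Fin n)} {picks : List O} {done : List (Fin n × O)} {rem : Finset O},
    crrValid W u seq picks done rem → (done.map Prod.snd).Nodup →
    rem = univ \ (done.map Prod.snd).toFinset → RoundRobinCounts done →
    (∀ k (hk : k < seq.length), seq[k].val = (done.length + k) % n) ∧
      seqValid10 u seq picks rem
  | [], [], _, _, _, _, _, _ => ⟨by simp, trivial⟩
  | a :: s, o :: ps, done, rem, ⟨ho, hbest, _, hmin, hfirst, hrun⟩, hnd, hrem, hcnt => by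
    have ha := crr_turn_eq_mod hn hW hnd hrem hcnt ⟨o, ho⟩ hmin hfirst
    have hfresh : o ∉ done.map Prod.snd := by
      simpa [hrem] using ho
    have hrem' : rem.erase o = univ \ (((a, o) :: done).map Prod.snd).toFinset := by
      rw [hrem, List.map_cons, List.toFinset_cons, sdiff_insert]
    obtain ⟨hturn, hseq⟩ := crrValid_roundRobin hn hW hrun (List.nodup_cons.2 ⟨hfresh, hnd⟩)
      hrem' (hcnt.cons hn ha o)
    refine ⟨fun k hk => ?_, ho, hbest, hseq⟩
    cases k with
    | zero => exact ha
    | succ k =>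
      simpa [Nat.add_right_comm _ 1 k, Nat.add_assoc] using hturn k (Nat.lt_of_succ_lt_succ hk)

end CRR

theorem mem_bundle10_iff {n : ℕ} {O : Type*} [DecidableEq O] {seq : List (Fin n)}
    {picks : List O} (hlen : seq.length = picks.length) (hnd : picks.Nodup)
    (hturn : ∀ k (hk : k < seq.length), seq[k].val = k % n) (c : Fin n) (x : O) :
    x ∈ bundle10 seq picks c ↔ x ∈ picks ∧ picks.idxOf x % n = c := by
  have hzip : ∀ p, p ∈ seq.zip picks ↔ ∃ k, ∃ hk : k < picks.length, (seq[k], picks[k]) = p := by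
    simp [List.mem_iff_getElem, hlen]
  simp only [bundle10, List.mem_toFinset, List.mem_filterMap, hzip,
    Option.ite_none_right_eq_some, Option.some.injEq]
  constructor
  · rintro ⟨_, ⟨k, hk, rfl⟩, hc, rfl⟩
    refine ⟨List.getElem_mem hk, ?_⟩
    rw [hnd.idxOf_getElem, ← hturn k (hlen ▸ hk), ← hc]
  · rintro ⟨hx, hc⟩
    have hk := List.idxOf_lt_length_iff.2 hx
    exact ⟨_, ⟨_, hk, rfl⟩, Fin.ext (by rw [hturn, hc]), List.getElem_idxOf hk⟩

theorem seqValid10.nef1_of_roundRobin {n : ℕ} {O : Type*} [DecidableEq O] {u : Fin n → O → ℝ}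
    {seq : List (Fin n)} {picks : List O} {rem : Finset O} (h : seqValid10 u seq picks rem)
    (hturn : ∀ k (hk : k < seq.length), seq[k].val = k % n) (i j : Fin n) :
    ∃ O' ⊆ bundle10 seq picks j, O'.card ≤ 1 ∧
      ∃ f : O → O, Set.InjOn f ((bundle10 seq picks j \ O' : Finset O) : Set O) ∧
        ∀ x ∈ bundle10 seq picks j \ O',
          f x ∈ bundle10 seq picks i ∧ u i x ≤ u i (f x) := by
  have hnd := h.nodup
  have hmem := mem_bundle10_iff h.length_eq hnd hturn
  set d := (j.val + n - i.val) % n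
  have hdn : d < n := Nat.mod_lt _ i.pos
  set O' := (bundle10 seq picks j).filter (picks.idxOf · < d)
  set f : O → O := fun x =>
    if hx : picks.idxOf x - d < picks.length then picks[picks.idxOf x - d] else x
  have hshift : ∀ x ∈ bundle10 seq picks j \ O', x ∈ picks ∧ d ≤ picks.idxOf x ∧
      ∃ hk : picks.idxOf x - d < picks.length,
        (picks.idxOf x - d) % n = i ∧ f x = picks[picks.idxOf x - d] := by
    intro x hx
    simp only [O', mem_sdiff, mem_filter, hmem, not_and, not_lt] at hx
    have hdx := hx.2 hx.1
    have hk : picks.idxOf x - d < picks.length :=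
      (Nat.sub_le _ _).trans_lt (List.idxOf_lt_length_iff.2 hx.1.1)
    exact ⟨hx.1.1, hdx, hk, sub_shift_mod_eq i.isLt hx.1.2 hdx, dif_pos hk⟩
  refine ⟨O', filter_subset _ _, card_le_one.2 fun x hx y hy => ?_, f, ?_, ?_⟩
  · simp only [O', mem_filter, hmem] at hx hy
    rw [Nat.mod_eq_of_lt (hx.2.trans hdn)] at hx
    rw [Nat.mod_eq_of_lt (hy.2.trans hdn)] at hy
    exact (List.idxOf_inj hx.1.1).1 (hx.1.2.trans hy.1.2.symm)
  · intro x hx y hy hxy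
    obtain ⟨hx, hdx, _, _, hfx⟩ := hshift x hx
    obtain ⟨_, hdy, _, _, hfy⟩ := hshift y hy
    rw [hfx, hfy, hnd.getElem_inj_iff] at hxy
    exact (List.idxOf_inj hx).1 (by omega)
  · intro x hx
    obtain ⟨hx, -, hk, hki, hfx⟩ := hshift x hx
    have hturn_i : seq[picks.idxOf x - d]'(h.length_eq ▸ hk) = i := Fin.ext (by rw [hturn, hki])
    refine ⟨hfx ▸ (hmem i _).2 ⟨List.getElem_mem hk, by rwa [hnd.idxOf_getElem]⟩, ?_⟩
    calc u i x = u i (picks[picks.idxOf x]'(List.idxOf_lt_length_iff.2 hx)) := by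
          rw [List.getElem_idxOf]
      _ ≤ u i (f x) := hfx ▸ hturn_i ▸ h.utility_le _ _ (Nat.sub_le _ _)

theorem stmt10_general {n : ℕ} (hn : 0 < n) {O : Type*} [Fintype O] [DecidableEq O]
    (u : Fin n → O → ℝ) (W : (O → Fin n) → Prop)
    (hW : ∀ q : O → Fin n, Balanced10 q → W q)
    (seq : List (Fin n)) (picks : List O)
    (hrun : crrValid W u seq picks [] Finset.univ) :
    (∀ k (hk : k < seq.length), seq.get ⟨k, hk⟩ = ⟨k % n, Nat.mod_lt _ hn⟩) ∧
    seqValid10 u seq picks Finset.univ ∧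
    ((∀ i o, 0 < u i o) →
      ∀ i j : Fin n, ∃ O' ⊆ bundle10 seq picks j, O'.card ≤ 1 ∧
        ∃ f : O → O, Set.InjOn f ((bundle10 seq picks j \ O' : Finset O) : Set O) ∧
          ∀ x ∈ bundle10 seq picks j \ O',
            f x ∈ bundle10 seq picks i ∧ u i x ≤ u i (f x)) := by
  obtain ⟨hturn, hseq⟩ := crrValid_roundRobin hn hW hrun List.nodup_nil (by simp)
    (fun i => by simp [cnt10, roundRobinCount])
  simp only [List.length_nil, zero_add] at hturn
  exact ⟨fun k hk => Fin.ext (hturn k hk), hseq, fun _ => hseq.nef1_of_roundRobin hturn⟩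

/-- If the target welfare set `W` contains all balanced allocations, then W-CRR coincides
with round-robin sequential allocation; in particular, with strictly positive utilities the
output is NEF1. -/
theorem stmt10 {n : ℕ} (hn : 0 < n) {O : Type*} [Fintype O] [DecidableEq O]
    (u : Fin n → O → ℝ) (W : (O → Fin n) → Prop)
    (hW : ∀ q : O → Fin n, Balanced10 q → W q)
    (seq : List (Fin n)) (picks : List O)
    (hrun : crrValid W u seq picks [] Finset.univ)
    (hfull : seq.length = Fintype.card O) :
    (∀ k (hk : k < seq.length), seq.get ⟨k, hk⟩ = ⟨k % n, Nat.mod_lt _ hn⟩) ∧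
    seqValid10 u seq picks Finset.univ ∧
    ((∀ i o, 0 < u i o) →
      ∀ i j : Fin n, ∃ O' ⊆ bundle10 seq picks j, O'.card ≤ 1 ∧
        ∃ f : O → O, Set.InjOn f ((bundle10 seq picks j \ O' : Finset O) : Set O) ∧
          ∀ x ∈ bundle10 seq picks j \ O',
            f x ∈ bundle10 seq picks i ∧ u i x ≤ u i (f x)) :=
  stmt10_general hn u W hW seq picks hrun
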